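/- For each k ∈ {0, 1, …, n−1}, each equivalence class T of ∼ in S contains exactly one k-skeletal area vector, namely, the unique element g of T of minimum area among those satisfying pos(g) > k. -/

import Mathlib

/-- An area vector: `g i.succ ≤ g i.castSucc + m` for all consecutive indices. -/
def IsAreaVec {n : ℕ} (m : ℝ) (g : Fin (n + 1) → ℝ) : Prop :=
  ∀ i : Fin n, g i.succ ≤ g i.castSucc + m

/-- The cycling operator `C(g₀,…,g_{n-1}) = (g₁,…,g_{n-1}, g₀ - c)`. -/
def cyc {n : ℕ} (c : ℝ) (g : Fin (n + 1) → ℝ) : Fin (n + 1) → ℝ :=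
  fun i => if h : (i : ℕ) + 1 < n + 1 then g ⟨(i : ℕ) + 1, h⟩ else g 0 - c

/-- The inverse cycling operator. -/
def cycInv {n : ℕ} (c : ℝ) (g : Fin (n + 1) → ℝ) : Fin (n + 1) → ℝ :=
  fun i => if 0 < (i : ℕ) then
      g ⟨(i : ℕ) - 1, Nat.lt_of_le_of_lt (Nat.sub_le _ _) i.isLt⟩
    else g (Fin.last n) + c

/-- Integer iterates `C^j` of the cycling operator. -/
def cycIter {n : ℕ} (c : ℝ) (j : ℤ) (g : Fin (n + 1) → ℝ) : Fin (n + 1) → ℝ :=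
  if 0 ≤ j then (cyc c)^[j.toNat] g else (cycInv c)^[(-j).toNat] g

/-- Membership in the set `S`: an area vector with values in `G`, `g 0 ≤ c`,
and last entry positive. -/
def MemS {n : ℕ} (G : AddSubgroup ℝ) (c m : ℝ) (g : Fin (n + 1) → ℝ) : Prop :=
  (∀ i, g i ∈ G) ∧ IsAreaVec m g ∧ g 0 ≤ c ∧ 0 < g (Fin.last n)

/-- `posStat g` is the largest `ℓ` such that the last `ℓ` entries of `g` are positive. -/
noncomputable def posStat {n : ℕ} (g : Fin (n + 1) → ℝ) : ℕ :=
  sSup {ℓ : ℕ | ℓ ≤ n + 1 ∧ ∀ i : Fin (n + 1), n + 1 - ℓ ≤ (i : ℕ) → 0 < g i}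

/-- `g` is a `k`-skeletal area vector: (A0) `g 0 ≤ c`; (A1) the last `k+1` entries
are strictly positive; (A2) no `k+1` consecutive entries all strictly exceed `c`. -/
def IsSkeletal {n : ℕ} (c m : ℝ) (k : ℕ) (g : Fin (n + 1) → ℝ) : Prop :=
  IsAreaVec m g ∧ g 0 ≤ c ∧
  (∀ i : Fin (n + 1), n - k ≤ (i : ℕ) → 0 < g i) ∧
  ¬ ∃ s : ℕ, s + k ≤ n ∧ ∀ j : Fin (n + 1), s ≤ (j : ℕ) → (j : ℕ) ≤ s + k → c < g j

/-!
Extend `g` to the sequence `f : ℤ → ℝ` with `f (i + q (n + 1)) = g i - q c`; then `C^j g` is the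
window `(f j, …, f (j + n))`, and moving the window one step lowers its area by `c`. Call `j`
admissible when the last `k + 1` entries of its window are positive. Admissible shifts exist and
are bounded above, because `f` drifts to `∓∞` at `±∞`. The greatest admissible shift `J`
satisfies (A0) and (A2): otherwise the shift by one, resp. just past a block of `k + 1` entries
exceeding `c`, would still be admissible. Conversely, if the window at `j` satisfies (A0) and
(A2) and some `j' > j` were admissible, translating the positive tail of window `j'` back by whole
periods (each adding `c`) gives `k + 1` consecutive entries `> c` at positions `r - k, …, r` of
window `j`, with `r ≡ j' - j - 1`; they either cover position `0` or fit in the window. So the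
skeletal elements of the class are exactly the window at `J`, which has least area among
admissible windows.
-/

def QuasiPeriodic (f : ℤ → ℝ) (N : ℤ) (c : ℝ) : Prop :=
  ∀ t, f (t + N) = f t - c

def TailPos (f : ℤ → ℝ) (n k : ℕ) (j : ℤ) : Prop :=
  ∀ t : ℤ, n - k ≤ t → t ≤ n → 0 < f (t + j)

namespace QuasiPeriodic

variable {f : ℤ → ℝ} {N : ℤ} {c : ℝ} {n k : ℕ}

theorem add_mul (hf : QuasiPeriodic f N c) (t q : ℤ) : f (t + q * N) = f t - q * c := by
  induction q using Int.induction_on with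
  | zero => simp
  | succ p ih =>
    rw [show t + (p + 1) * N = t + p * N + N by ring, hf, ih]
    push_cast
    ring
  | pred p ih =>
    have h := hf (t + (-p - 1) * N)
    rw [show t + (-p - 1) * N + N = t + -p * N by ring, ih] at h
    push_cast at h ⊢
    linarith

theorem apply_eq_emod (hf : QuasiPeriodic f N c) (t : ℤ) :
    f t = f (t % N) - ((t / N : ℤ) : ℝ) * c := by
  rw [← hf.add_mul, Int.emod_add_ediv_mul]

theorem sum_window_succ (hf : QuasiPeriodic f (n + 1) c) (j : ℤ) :
    ∑ i : Fin (n + 1), f (i + (j + 1)) = ∑ i : Fin (n + 1), f (i + j) - c := by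
  have hsplit := (Fin.sum_univ_succ fun i : Fin (n + 2) => f (i + j)).symm.trans
    (Fin.sum_univ_castSucc fun i : Fin (n + 2) => f (i + j))
  have hlast : f ((Fin.last (n + 1) : ℕ) + j) = f j - c := by
    rw [← hf, Fin.val_last]; push_cast; ring_nf
  simp only [Fin.val_succ, Fin.val_castSucc, Fin.val_zero, hlast, Nat.cast_add, Nat.cast_one,
    Nat.cast_zero, zero_add, add_right_comm _ (1 : ℤ), add_assoc] at hsplit
  linarith

theorem antitone_sum_window (hf : QuasiPeriodic f (n + 1) c) (hc : 0 ≤ c) :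
    Antitone fun j => ∑ i : Fin (n + 1), f (i + j) :=
  antitone_int_of_succ_le fun j => by simp only [hf.sum_window_succ]; linarith

theorem tailPos_nonempty (hf : QuasiPeriodic f (n + 1) c) (hc : 0 < c) :
    {j | TailPos f n k j}.Nonempty := by
  obtain ⟨B, hB⟩ := ((Set.finite_Icc ((n : ℤ) - k) n).image f).bddBelow
  obtain ⟨q, hq⟩ := exists_nat_gt (-B / c)
  refine ⟨-q * (n + 1), fun t ht1 ht2 => ?_⟩
  have hBt : B ≤ f t := hB ⟨t, ⟨ht1, ht2⟩, rfl⟩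
  rw [hf.add_mul]
  have := (div_lt_iff₀ hc).mp hq
  push_cast
  linarith

theorem tailPos_bddAbove (hf : QuasiPeriodic f (n + 1) c) (hc : 0 < c) :
    BddAbove {j | TailPos f n k j} := by
  obtain ⟨M, hM⟩ := ((Set.finite_Ico (0 : ℤ) (n + 1)).image f).bddAbove
  obtain ⟨q, hq⟩ := exists_nat_gt (M / c)
  refine ⟨q * (n + 1), fun j hj => ?_⟩
  have hpos := hj n (by omega) le_rfl
  have hN : (0 : ℤ) < n + 1 := by positivity
  have hMr : f ((n + j) % (n + 1)) ≤ M :=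
    hM ⟨_, ⟨Int.emod_nonneg _ hN.ne', Int.emod_lt_of_pos _ hN⟩, rfl⟩
  rw [hf.apply_eq_emod] at hpos
  have hQ : (n + j) / (n + 1) < q := by
    have : (((n + j) / (n + 1) : ℤ) : ℝ) * c < q * c := by linarith [(div_lt_iff₀ hc).mp hq]
    exact_mod_cast lt_of_mul_lt_mul_right this hc.le
  have := (Int.ediv_lt_iff_lt_mul hN).mp hQ
  linarith [Int.natCast_nonneg n]

theorem tailPos_succ (hf : QuasiPeriodic f (n + 1) c) {j : ℤ} (hj : TailPos f n k j)
    (hcj : c < f j) : TailPos f n k (j + 1) := by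
  intro t ht1 ht2
  rcases ht2.lt_or_eq with ht2 | rfl
  · rw [← add_assoc, add_right_comm]
    exact hj (t + 1) (by omega) (by omega)
  · rw [show (n : ℤ) + (j + 1) = j + (n + 1) by ring, hf]
    linarith

theorem tailPos_of_window (hf : QuasiPeriodic f (n + 1) c) {j s : ℤ}
    (hs : ∀ t : ℤ, s ≤ t → t ≤ s + k → c < f (t + j)) : TailPos f n k (j + s + k + 1) := by
  intro t ht1 ht2
  rw [show t + (j + s + k + 1) = (s + k + t - n) + j + (n + 1) by ring, hf]
  linarith [hs (s + k + t - n) (by omega) (by omega)]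

theorem le_of_tailPos (hf : QuasiPeriodic f (n + 1) c) (hc : 0 ≤ c) {j j' : ℤ}
    (h0 : f j ≤ c)
    (hwin : ¬∃ s : ℕ, s + k ≤ n ∧ ∀ t : ℤ, s ≤ t → t ≤ s + k → c < f (t + j))
    (hj' : TailPos f n k j') : j' ≤ j := by
  by_contra! hlt
  have hN : (0 : ℤ) < n + 1 := by positivity
  set r := (j' - j - 1) % (n + 1) with hr
  set q := (j' - j - 1) / (n + 1) with hq
  have hr0 : 0 ≤ r := Int.emod_nonneg _ hN.ne'
  have hrn : r < n + 1 := Int.emod_lt_of_pos _ hN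
  have hq0 : 0 ≤ q := Int.ediv_nonneg (by omega) hN.le
  have hdecomp : j' = j + 1 + r + q * (n + 1) := by
    have := Int.emod_add_ediv_mul (j' - j - 1) (n + 1)
    rw [← hr, ← hq] at this
    linarith
  have hbig : ∀ v : ℤ, r - k ≤ v → v ≤ r → c < f (v + j) := by
    intro v hv1 hv2
    have hpos := hj' (v + n - r) (by omega) (by omega)
    rw [show v + n - r + j' = v + j + (q + 1) * (n + 1) by rw [hdecomp]; ring, hf.add_mul] at hpos
    have : 0 ≤ (q : ℝ) * c := mul_nonneg (by exact_mod_cast hq0) hc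
    push_cast at hpos
    linarith
  rcases lt_or_ge r k with hrk | hrk
  · have := hbig 0 (by omega) (by omega)
    rw [zero_add] at this
    linarith
  · exact hwin ⟨(r - k).toNat, by omega, fun t ht1 ht2 => hbig t (by omega) (by omega)⟩

theorem isGreatest_tailPos_iff (hf : QuasiPeriodic f (n + 1) c) (hc : 0 ≤ c) {j : ℤ} :
    IsGreatest {j | TailPos f n k j} j ↔
      f j ≤ c ∧ TailPos f n k j ∧
        ¬∃ s : ℕ, s + k ≤ n ∧ ∀ t : ℤ, s ≤ t → t ≤ s + k → c < f (t + j) := by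
  constructor
  · rintro ⟨hj, hmax⟩
    refine ⟨?_, hj, ?_⟩
    · by_contra! hcj
      have := hmax (hf.tailPos_succ hj hcj)
      omega
    · rintro ⟨s, -, hs⟩
      have := hmax (hf.tailPos_of_window hs)
      omega
  · rintro ⟨h0, hj, hwin⟩
    exact ⟨hj, fun j' hj' => hf.le_of_tailPos hc h0 hwin hj'⟩

theorem cyc_window (hf : QuasiPeriodic f (n + 1) c) (a : ℤ) :
    cyc c (fun i : Fin (n + 1) => f (i + a)) = fun i : Fin (n + 1) => f (i + (a + 1)) := by
  funext i
  simp only [cyc]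
  split_ifs with h
  · congr 1
    push_cast
    ring
  · rw [show (i : ℤ) + (a + 1) = (((0 : Fin (n + 1)) : ℕ) : ℤ) + a + (n + 1) by
      simp only [Fin.val_zero]; omega, hf]

theorem cycInv_window (hf : QuasiPeriodic f (n + 1) c) (a : ℤ) :
    cycInv c (fun i : Fin (n + 1) => f (i + a)) = fun i : Fin (n + 1) => f (i + (a - 1)) := by
  funext i
  simp only [cycInv]
  split_ifs with h
  · congr 1
    push_cast [Nat.cast_sub (Nat.one_le_of_lt h)]
    ring
  · rw [show (((Fin.last n : Fin (n + 1)) : ℕ) : ℤ) + a = i + (a - 1) + (n + 1) by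
      simp only [Fin.val_last]; omega, hf]
    ring

theorem cycIter_window (hf : QuasiPeriodic f (n + 1) c) (j a : ℤ) :
    cycIter c j (fun i : Fin (n + 1) => f (i + a)) = fun i : Fin (n + 1) => f (i + (a + j)) := by
  have hcyc : Function.Semiconj (fun a (i : Fin (n + 1)) => f (i + a)) (· + 1) (cyc c) :=
    fun a => (hf.cyc_window a).symm
  have hcycInv : Function.Semiconj (fun a (i : Fin (n + 1)) => f (i + a)) (· + -1) (cycInv c) :=
    fun a => (hf.cycInv_window a).symm
  unfold cycIter
  split_ifs with hj
  · rw [← hcyc.iterate_right, add_right_iterate_apply, nsmul_one, Int.toNat_of_nonneg hj]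
  · rw [← hcycInv.iterate_right, add_right_iterate_apply, nsmul_eq_mul,
      Int.toNat_of_nonneg (by omega)]
    simp

end QuasiPeriodic

section PeriodicExt

variable {n : ℕ} {c : ℝ} {g : Fin (n + 1) → ℝ}

noncomputable def periodicExt (c : ℝ) (g : Fin (n + 1) → ℝ) (t : ℤ) : ℝ :=
  g ⟨(t % (n + 1)).toNat, by
      have := Int.emod_lt_of_pos t (show (0 : ℤ) < n + 1 by positivity); omega⟩ -
    ((t / (n + 1) : ℤ) : ℝ) * c

theorem periodicExt_fin_add_mul (i : Fin (n + 1)) (q : ℤ) :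
    periodicExt c g (i + q * (n + 1)) = g i - q * c := by
  have hi : (i : ℤ) < n + 1 := by exact_mod_cast i.isLt
  have hN : (0 : ℤ) < n + 1 := by positivity
  have hmod : ((i : ℤ) + q * (n + 1)) % (n + 1) = i := by
    rw [Int.add_mul_emod_self_right, Int.emod_eq_of_lt (by positivity) hi]
  have hdiv : ((i : ℤ) + q * (n + 1)) / (n + 1) = q := by
    rw [Int.add_mul_ediv_right _ _ hN.ne', Int.ediv_eq_zero_of_lt (by positivity) hi, zero_add]
  simp only [periodicExt, hmod, hdiv, Int.toNat_natCast, Fin.eta]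

theorem periodicExt_fin (i : Fin (n + 1)) : periodicExt c g i = g i := by
  simpa using periodicExt_fin_add_mul (c := c) (g := g) i 0

theorem exists_fin_add_mul (t : ℤ) : ∃ (i : Fin (n + 1)) (q : ℤ), t = i + q * (n + 1) := by
  have hN : (0 : ℤ) < n + 1 := by positivity
  have h0 := Int.emod_nonneg t hN.ne'
  refine ⟨⟨(t % (n + 1)).toNat, by have := Int.emod_lt_of_pos t hN; omega⟩, t / (n + 1), ?_⟩
  simp only [Int.toNat_of_nonneg h0, Int.emod_add_ediv_mul]

theorem quasiPeriodic_periodicExt : QuasiPeriodic (periodicExt c g) (n + 1) c := by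
  intro t
  obtain ⟨i, q, rfl⟩ := exists_fin_add_mul (n := n) t
  rw [add_assoc, ← add_one_mul, periodicExt_fin_add_mul, periodicExt_fin_add_mul]
  push_cast
  ring

theorem cycIter_eq_periodicExt (j : ℤ) :
    cycIter c j g = fun i : Fin (n + 1) => periodicExt c g (i + j) := by
  have h := (quasiPeriodic_periodicExt (c := c) (g := g)).cycIter_window j 0
  simp only [add_zero, zero_add, periodicExt_fin] at h
  exact h

theorem periodicExt_succ_le {m : ℝ} (hA : IsAreaVec m g) (hwrap : g 0 - c ≤ g (Fin.last n) + m)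
    (t : ℤ) : periodicExt c g (t + 1) ≤ periodicExt c g t + m := by
  obtain ⟨i, q, rfl⟩ := exists_fin_add_mul (n := n) t
  rw [periodicExt_fin_add_mul]
  rcases Fin.eq_castSucc_or_eq_last i with ⟨i, rfl⟩ | rfl
  · rw [show (i.castSucc : ℤ) + q * (n + 1) + 1 = (i.succ : ℤ) + q * (n + 1) by
      simp only [Fin.val_castSucc, Fin.val_succ, Nat.cast_add, Nat.cast_one]; ring,
      periodicExt_fin_add_mul]
    linarith [hA i]
  · rw [show (Fin.last n : ℤ) + q * (n + 1) + 1 = ((0 : Fin (n + 1)) : ℤ) + (q + 1) * (n + 1) by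
      simp only [Fin.val_last, Fin.val_zero, Nat.cast_zero, zero_add]; ring, periodicExt_fin_add_mul]
    push_cast
    linarith

theorem periodicExt_mem {G : AddSubgroup ℝ} (hcG : c ∈ G) (hg : ∀ i, g i ∈ G) (t : ℤ) :
    periodicExt c g t ∈ G :=
  G.sub_mem (hg _) (by simpa only [zsmul_eq_mul] using G.zsmul_mem hcG (t / (n + 1)))

end PeriodicExt

theorem lt_posStat_iff {n k : ℕ} (hk : k ≤ n) (h : Fin (n + 1) → ℝ) :
    k < posStat h ↔ ∀ i : Fin (n + 1), n - k ≤ (i : ℕ) → 0 < h i := by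
  set L := {ℓ : ℕ | ℓ ≤ n + 1 ∧ ∀ i : Fin (n + 1), n + 1 - ℓ ≤ (i : ℕ) → 0 < h i}
  have hbdd : BddAbove L := ⟨n + 1, fun ℓ hℓ => hℓ.1⟩
  constructor
  · intro (hlt : k < sSup L) i hi
    have hne : L.Nonempty := ⟨0, by omega, fun i hi => absurd i.isLt (by omega)⟩
    exact (Nat.sSup_mem hne hbdd).2 i (by omega)
  · intro hpos
    exact Nat.lt_of_succ_le (le_csSup hbdd ⟨by omega, fun i hi => hpos i (by omega)⟩)

theorem Fin.forall_Icc_iff_int {n a b : ℕ} (hb : b ≤ n) {p : ℤ → Prop} :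
    (∀ i : Fin (n + 1), a ≤ (i : ℕ) → (i : ℕ) ≤ b → p i) ↔ ∀ t : ℤ, a ≤ t → t ≤ b → p t := by
  constructor
  · intro h t ht1 ht2
    lift t to ℕ using by omega
    exact h ⟨t, by omega⟩ (by simpa using ht1) (by simpa using ht2)
  · intro h i hi1 hi2
    exact h i (by exact_mod_cast hi1) (by exact_mod_cast hi2)

theorem isAreaVec_window {n : ℕ} {f : ℤ → ℝ} {m : ℝ} (hf : ∀ t, f (t + 1) ≤ f t + m) (a : ℤ) :
    IsAreaVec m fun i : Fin (n + 1) => f (i + a) := fun i => by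
  simpa [add_right_comm] using hf (i + a)

section Skeletal

variable {n k : ℕ} {c m : ℝ} {g : Fin (n + 1) → ℝ}

theorem tailPos_periodicExt_iff (hk : k ≤ n) (j : ℤ) :
    TailPos (periodicExt c g) n k j ↔ ∀ i : Fin (n + 1), n - k ≤ (i : ℕ) → 0 < cycIter c j g i := by
  have hnk : ((n - k : ℕ) : ℤ) = n - k := by omega
  rw [cycIter_eq_periodicExt, TailPos, ← hnk, ← Fin.forall_Icc_iff_int le_rfl]
  exact forall_congr' fun i => ⟨fun h hi => h hi (by omega), fun h hi _ => h hi⟩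

theorem isSkeletal_cycIter_iff (hA : IsAreaVec m g) (hwrap : g 0 - c ≤ g (Fin.last n) + m)
    (hc : 0 ≤ c) (hk : k ≤ n) (j : ℤ) :
    IsSkeletal c m k (cycIter c j g) ↔ IsGreatest {j | k < posStat (cycIter c j g)} j := by
  simp only [lt_posStat_iff hk, ← tailPos_periodicExt_iff hk,
    quasiPeriodic_periodicExt.isGreatest_tailPos_iff hc]
  have hwin : (¬∃ s : ℕ, s + k ≤ n ∧ ∀ i : Fin (n + 1), s ≤ (i : ℕ) → (i : ℕ) ≤ s + k →
      c < periodicExt c g (i + j)) ↔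
      ¬∃ s : ℕ, s + k ≤ n ∧ ∀ t : ℤ, s ≤ t → t ≤ s + k → c < periodicExt c g (t + j) :=
    not_congr <| exists_congr fun s => and_congr_right fun hs => by
      simpa only [Nat.cast_add] using
        Fin.forall_Icc_iff_int (a := s) (p := fun t => c < periodicExt c g (t + j)) hs
  rw [IsSkeletal, tailPos_periodicExt_iff hk, cycIter_eq_periodicExt]
  simp only [Fin.val_zero, Nat.cast_zero, zero_add, hwin]
  exact ⟨fun h => h.2, fun h => ⟨isAreaVec_window (periodicExt_succ_le hA hwrap) j, h⟩⟩

theorem exists_isGreatest_lt_posStat_cycIter (hc : 0 < c) (hk : k ≤ n) :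
    ∃ J, IsGreatest {j | k < posStat (cycIter c j g)} J := by
  simp only [lt_posStat_iff hk, ← tailPos_periodicExt_iff hk]
  exact (quasiPeriodic_periodicExt.tailPos_bddAbove hc).exists_isGreatest_of_nonempty
    (quasiPeriodic_periodicExt.tailPos_nonempty hc)

theorem antitone_sum_cycIter (hc : 0 ≤ c) : Antitone fun j => ∑ i, cycIter c j g i := by
  simpa only [cycIter_eq_periodicExt] using quasiPeriodic_periodicExt.antitone_sum_window hc

theorem IsSkeletal.memS {G : AddSubgroup ℝ} {h : Fin (n + 1) → ℝ} (hsk : IsSkeletal c m k h)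
    (hG : ∀ i, h i ∈ G) : MemS G c m h :=
  ⟨hG, hsk.1, hsk.2.1, hsk.2.2.1 _ (by simp)⟩

end Skeletal

theorem stmt7_general (n : ℕ) (G : AddSubgroup ℝ) (c m : ℝ)
    (hcG : c ∈ G) (hc : 0 < c) (hm : 0 ≤ m)
    (k : ℕ) (hk : k ≤ n)
    (g : Fin (n + 1) → ℝ) (hg : MemS G c m g) :
    (∃! h : Fin (n + 1) → ℝ,
      MemS G c m h ∧ (∃ j : ℤ, h = cycIter c j g) ∧ IsSkeletal c m k h) ∧
    (∀ h : Fin (n + 1) → ℝ, MemS G c m h → (∃ j : ℤ, h = cycIter c j g) →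
      IsSkeletal c m k h →
        k < posStat h ∧
        ∀ h' : Fin (n + 1) → ℝ, MemS G c m h' → (∃ j : ℤ, h' = cycIter c j g) →
          k < posStat h' → (∑ i, h i) ≤ ∑ i, h' i) := by
  obtain ⟨hgG, hA, hg0, hglast⟩ := hg
  have hskel := isSkeletal_cycIter_iff hA (by linarith) hc.le hk
  obtain ⟨J, hJ⟩ := exists_isGreatest_lt_posStat_cycIter (g := g) hc hk
  have hJskel := (hskel J).2 hJ
  have hJG : ∀ i, cycIter c J g i ∈ G := by
    simpa only [cycIter_eq_periodicExt] using fun i => periodicExt_mem hcG hgG _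
  refine ⟨⟨cycIter c J g, ⟨hJskel.memS hJG, ⟨J, rfl⟩, hJskel⟩, ?_⟩, ?_⟩
  · rintro _ ⟨-, ⟨j, rfl⟩, hj⟩
    rw [((hskel j).1 hj).unique hJ]
  · rintro _ - ⟨j, rfl⟩ hj
    refine ⟨((hskel j).1 hj).1, ?_⟩
    rintro _ - ⟨j', rfl⟩ hj'
    exact antitone_sum_cycIter hc.le (((hskel j).1 hj).2 hj')

/-- each equivalence class of `∼` in `S` contains exactly one
`k`-skeletal area vector, namely the unique element of minimum area among those
with `pos > k`. -/
theorem stmt7 (n : ℕ) (G : AddSubgroup ℝ) (c m : ℝ)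
    (hcG : c ∈ G) (hmG : m ∈ G) (hc : 0 < c) (hm : 0 ≤ m)
    (k : ℕ) (hk : k ≤ n)
    (g : Fin (n + 1) → ℝ) (hg : MemS G c m g) :
    (∃! h : Fin (n + 1) → ℝ,
      MemS G c m h ∧ (∃ j : ℤ, h = cycIter c j g) ∧ IsSkeletal c m k h) ∧
    (∀ h : Fin (n + 1) → ℝ, MemS G c m h → (∃ j : ℤ, h = cycIter c j g) →
      IsSkeletal c m k h →
        k < posStat h ∧
        ∀ h' : Fin (n + 1) → ℝ, MemS G c m h' → (∃ j : ℤ, h' = cycIter c j g) →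
          k < posStat h' → (∑ i, h i) ≤ ∑ i, h' i) :=
  stmt7_general n G c m hcG hc hm k hk g hg
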